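/- arXiv:0911.1684 — 2 statements merged into one kernel-verified Lean document; each statement's English description precedes it below -/
import Mathlib

section
/- (Risk decomposition) Suppose for each k ∈ ℤ one observes c̃_k = θ_k γ̃_k + (ε/√n) ξ_k where θ_k ∈ ℂ with ∑_k |θ_k|² < ∞, γ̃_k = (1/n)∑_{j=1}^n e^{-2πik τ_j} with τ_j i.i.d., γ_k = E[e^{-2πikτ₁}] ≠ 0, and the ξ_k are complex random variables independent of the τ_j with E[ξ_k] = 0 and E[|ξ_k|²] = 1. For a nonrandom real filter λ = (λ_k) define θ̂_k = λ_k c̃_k / γ_k. Then E ∑_k |θ̂_k - θ_k|² = ∑_k (λ_k - 1)² |θ_k|² + (ε²/n) ∑_k λ_k²/|γ_k|² + (1/n) ∑_k λ_k² |θ_k|² (1/|γ_k|² - 1). -/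
/-!
Write `γ̃_k = γ_k + (γ̃_k - γ_k)`. The error `θ̂_k - θ_k` is then the bias `(λ_k - 1) θ_k` plus
the two centred fluctuations `λ_k θ_k (γ̃_k - γ_k) / γ_k` and `λ_k ε ξ_k / (√n γ_k)`. These three
terms are orthogonal in `L²(μ)` (the last two because `ξ_k` is centred and independent of `γ̃_k`),
so the risk at frequency `k` is the sum of their second moments, and
`E|γ̃_k - γ_k|² = (1 - |γ_k|²) / n` because `γ̃_k` is the mean of `n` independent unimodular
variables with mean `γ_k`. Off the finite support of `λ` the error is the deterministic `|θ_k|²`,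
so expectation and summation over `k` commute.
-/

open MeasureTheory ProbabilityTheory Real

open scoped InnerProductSpace

section Pythagoras

variable {Ω 𝕜 E : Type*} [MeasurableSpace Ω] {μ : Measure Ω} [RCLike 𝕜]
  [NormedAddCommGroup E] [InnerProductSpace 𝕜 E]

lemma MeasureTheory.MemLp.integrable_inner {X Y : Ω → E} (hX : MemLp X 2 μ) (hY : MemLp Y 2 μ) :
    Integrable (fun ω => ⟪X ω, Y ω⟫_𝕜) μ := by
  refine ((hX.integrable_norm_pow two_ne_zero).add (hY.integrable_norm_pow two_ne_zero)).mono'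
    (hX.1.inner hY.1) (Filter.Eventually.of_forall fun ω => ?_)
  rw [Pi.add_apply]
  have := two_mul_le_add_sq ‖X ω‖ ‖Y ω‖
  nlinarith [norm_inner_le_norm (𝕜 := 𝕜) (X ω) (Y ω), norm_nonneg (X ω), norm_nonneg (Y ω)]

lemma integral_norm_add_sq_of_integral_inner_eq_zero {X Y : Ω → E} (hX : MemLp X 2 μ)
    (hY : MemLp Y 2 μ) (horth : ∫ ω, ⟪X ω, Y ω⟫_𝕜 ∂μ = 0) :
    ∫ ω, ‖X ω + Y ω‖ ^ 2 ∂μ = ∫ ω, ‖X ω‖ ^ 2 ∂μ + ∫ ω, ‖Y ω‖ ^ 2 ∂μ := by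
  have hXY := hX.integrable_inner (𝕜 := 𝕜) hY
  have hre : ∫ ω, RCLike.re ⟪X ω, Y ω⟫_𝕜 ∂μ = 0 := by
    rw [integral_re hXY, horth, map_zero]
  simp_rw [norm_add_sq (𝕜 := 𝕜)]
  rw [integral_add ((hX.integrable_norm_pow two_ne_zero).fun_add (hXY.re.const_mul 2))
      (hY.integrable_norm_pow two_ne_zero),
    integral_add (hX.integrable_norm_pow two_ne_zero) (hXY.re.const_mul 2), integral_const_mul,
    hre, mul_zero, add_zero]

lemma integral_norm_sum_sq_of_pairwise_integral_inner_eq_zero {ι : Type*} (s : Finset ι)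
    {X : ι → Ω → E} (hX : ∀ i ∈ s, MemLp (X i) 2 μ)
    (horth : (s : Set ι).Pairwise fun i j => ∫ ω, ⟪X i ω, X j ω⟫_𝕜 ∂μ = 0) :
    ∫ ω, ‖∑ i ∈ s, X i ω‖ ^ 2 ∂μ = ∑ i ∈ s, ∫ ω, ‖X i ω‖ ^ 2 ∂μ := by
  classical
  induction s using Finset.induction_on with
  | empty => simp
  | insert a s ha ih =>
    simp only [Finset.sum_insert ha]
    rw [Finset.forall_mem_insert] at hX
    rw [Finset.coe_insert, Set.pairwise_insert] at horth
    have hsum : MemLp (fun ω => ∑ i ∈ s, X i ω) 2 μ := memLp_finsetSum s hX.2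
    rw [integral_norm_add_sq_of_integral_inner_eq_zero (𝕜 := 𝕜) hX.1 hsum, ih hX.2 horth.1]
    simp_rw [inner_sum]
    rw [integral_finsetSum s fun i hi => hX.1.integrable_inner (hX.2 i hi)]
    exact Finset.sum_eq_zero fun i hi => (horth.2 i hi (ne_of_mem_of_not_mem hi ha).symm).1

end Pythagoras

section Scalar

variable {Ω 𝕜 : Type*} [MeasurableSpace Ω] {μ : Measure Ω} [RCLike 𝕜]

lemma ProbabilityTheory.IndepFun.integral_inner_eq {X Y : Ω → 𝕜} (hXY : IndepFun X Y μ)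
    (hX : AEStronglyMeasurable X μ) (hY : AEStronglyMeasurable Y μ) :
    ∫ ω, ⟪X ω, Y ω⟫_𝕜 ∂μ = ⟪∫ ω, X ω ∂μ, ∫ ω, Y ω ∂μ⟫_𝕜 := by
  simp_rw [RCLike.inner_apply]
  have h := (hXY.symm.comp measurable_id RCLike.continuous_conj.measurable
    ).integral_fun_mul_eq_mul_integral hY (RCLike.continuous_conj.comp_aestronglyMeasurable hX)
  simp only [Function.comp_apply, id] at h
  rw [h, integral_conj]

variable [IsProbabilityMeasure μ]

lemma integral_sub_integral {X : Ω → 𝕜} (hX : Integrable X μ) :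
    ∫ ω, (X ω - ∫ ω', X ω' ∂μ) ∂μ = 0 := by
  simp [integral_sub hX (integrable_const _)]

lemma integral_norm_sub_integral_sq {X : Ω → 𝕜} (hX : MemLp X 2 μ) :
    ∫ ω, ‖X ω - ∫ ω', X ω' ∂μ‖ ^ 2 ∂μ = ∫ ω, ‖X ω‖ ^ 2 ∂μ - ‖∫ ω, X ω ∂μ‖ ^ 2 := by
  set m := ∫ ω, X ω ∂μ
  have hXm : MemLp (fun ω => X ω - m) 2 μ := hX.sub (memLp_const m)
  have horth : ∫ ω, ⟪X ω - m, m⟫_𝕜 ∂μ = 0 := by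
    rw [(indepFun_const_right _ m).integral_inner_eq hXm.1 aestronglyMeasurable_const,
      integral_sub_integral (hX.integrable one_le_two), inner_zero_left]
  have := integral_norm_add_sq_of_integral_inner_eq_zero hXm (memLp_const m) horth
  simp only [sub_add_cancel, integral_const, probReal_univ, one_smul] at this
  linarith

lemma integral_norm_average_sub_sq {n : ℕ} (hn : n ≠ 0) {X : Fin n → Ω → 𝕜} {m : 𝕜} {σ2 : ℝ}
    (hX : ∀ j, MemLp (X j) 2 μ) (hind : Pairwise fun i j => IndepFun (X i) (X j) μ)
    (hmean : ∀ j, ∫ ω, X j ω ∂μ = m) (hvar : ∀ j, ∫ ω, ‖X j ω - m‖ ^ 2 ∂μ = σ2) :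
    ∫ ω, ‖(n : 𝕜)⁻¹ * ∑ j, X j ω - m‖ ^ 2 ∂μ = σ2 / n := by
  have hcenter : ∀ ω, (n : 𝕜)⁻¹ * ∑ j, X j ω - m = (n : 𝕜)⁻¹ * ∑ j, (X j ω - m) := by
    intro ω
    rw [Finset.sum_sub_distrib, Finset.sum_const, Finset.card_univ, Fintype.card_fin,
      nsmul_eq_mul, mul_sub, inv_mul_cancel_left₀ (Nat.cast_ne_zero.2 hn)]
  have horth : ((Finset.univ : Finset (Fin n)) : Set (Fin n)).Pairwise
      fun i j => ∫ ω, ⟪X i ω - m, X j ω - m⟫_𝕜 ∂μ = 0 := by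
    intro i _ j _ hij
    refine (((hind hij).comp (measurable_id.sub_const m) (measurable_id.sub_const m)
      ).integral_inner_eq ((hX i).1.sub aestronglyMeasurable_const)
        ((hX j).1.sub aestronglyMeasurable_const)).trans ?_
    simp only [Function.comp_apply, id_eq]
    rw [← hmean i, integral_sub_integral ((hX i).integrable one_le_two), inner_zero_left]
  simp_rw [hcenter, norm_mul, mul_pow]
  rw [integral_const_mul, integral_norm_sum_sq_of_pairwise_integral_inner_eq_zero _
    (X := fun j ω => X j ω - m) (fun j _ => (hX j).sub (memLp_const m)) horth]
  simp only [norm_inv, RCLike.norm_natCast, inv_pow, hvar, Finset.sum_const, Finset.card_univ,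
    Fintype.card_fin, nsmul_eq_mul]
  field_simp

lemma moments_average_of_unimodular {α : Type*} [MeasurableSpace α] {n : ℕ} {τ : Fin n → Ω → α}
    (hτ : ∀ j, Measurable (τ j)) (hindep : iIndepFun τ μ) {j₀ : Fin n}
    (hident : ∀ j, IdentDistrib (τ j) (τ j₀) μ μ) {f : α → 𝕜} (hf : Measurable f)
    (hf1 : ∀ x, ‖f x‖ = 1) {m : 𝕜} (hm : ∫ ω, f (τ j₀ ω) ∂μ = m) {G : Ω → 𝕜}
    (hG : ∀ ω, G ω = (n : 𝕜)⁻¹ * ∑ j, f (τ j ω)) :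
    MemLp G 2 μ ∧ ∫ ω, G ω ∂μ = m ∧ ∫ ω, ‖G ω - m‖ ^ 2 ∂μ = (1 - ‖m‖ ^ 2) / n := by
  have hn : n ≠ 0 := j₀.pos.ne'
  have hX : ∀ j, MemLp (fun ω => f (τ j ω)) 2 μ := fun j =>
    MemLp.of_bound (hf.comp (hτ j)).aestronglyMeasurable 1
      (Filter.Eventually.of_forall fun ω => (hf1 _).le)
  have hmean : ∀ j, ∫ ω, f (τ j ω) ∂μ = m := fun j => ((hident j).comp hf).integral_eq.trans hm
  have hvar : ∀ j, ∫ ω, ‖f (τ j ω) - m‖ ^ 2 ∂μ = 1 - ‖m‖ ^ 2 := fun j => by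
    simpa [hmean j, hf1] using integral_norm_sub_integral_sq (hX j)
  have hG' : G = fun ω => (n : 𝕜)⁻¹ * ∑ j, f (τ j ω) := funext hG
  subst hG'
  refine ⟨(memLp_finsetSum _ fun j _ => hX j).const_mul _, ?_,
    integral_norm_average_sub_sq hn hX (fun i j hij => (hindep.indepFun hij).comp hf hf)
      hmean hvar⟩
  rw [integral_const_mul, integral_finsetSum _ fun j _ => (hX j).integrable one_le_two]
  simp [hmean, hn]

lemma integral_norm_filter_sub_sq {G Ξ : Ω → 𝕜} {θ γ δ : 𝕜} (l : ℝ) (hγ : γ ≠ 0)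
    (hG : MemLp G 2 μ) (hΞ : MemLp Ξ 2 μ) (hind : IndepFun G Ξ μ) (hGm : ∫ ω, G ω ∂μ = γ)
    (hΞm : ∫ ω, Ξ ω ∂μ = 0) :
    ∫ ω, ‖(l : 𝕜) * (θ * G ω + δ * Ξ ω) / γ - θ‖ ^ 2 ∂μ
      = (l - 1) ^ 2 * ‖θ‖ ^ 2 + l ^ 2 * ‖θ‖ ^ 2 / ‖γ‖ ^ 2 * ∫ ω, ‖G ω - γ‖ ^ 2 ∂μ
        + l ^ 2 * ‖δ‖ ^ 2 / ‖γ‖ ^ 2 * ∫ ω, ‖Ξ ω‖ ^ 2 ∂μ := by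
  set bias : 𝕜 := ((l - 1 : ℝ) : 𝕜) * θ
  set a : 𝕜 := l * θ / γ
  set b : 𝕜 := l * δ / γ
  have hsplit : ∀ ω,
      (l : 𝕜) * (θ * G ω + δ * Ξ ω) / γ - θ = (bias + a * (G ω - γ)) + b * Ξ ω := by
    intro ω
    simp only [bias, a, b, RCLike.ofReal_sub, RCLike.ofReal_one]
    field_simp
    ring
  have hU : MemLp (fun ω => a * (G ω - γ)) 2 μ := (hG.sub (memLp_const γ)).const_mul a
  have hUm : ∫ ω, a * (G ω - γ) ∂μ = 0 := by
    rw [integral_const_mul, ← hGm, integral_sub_integral (hG.integrable one_le_two), mul_zero]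
  have horth₁ : ∫ ω, ⟪bias, a * (G ω - γ)⟫_𝕜 ∂μ = 0 := by
    rw [(indepFun_const_left bias _).integral_inner_eq aestronglyMeasurable_const hU.1, hUm,
      inner_zero_right]
  have horth₂ : ∫ ω, ⟪bias + a * (G ω - γ), b * Ξ ω⟫_𝕜 ∂μ = 0 := by
    refine ((hind.comp (measurable_id.sub_const γ |>.const_mul a |>.const_add bias)
      (measurable_id.const_mul b)).integral_inner_eq
        (aestronglyMeasurable_const.add hU.1) (hΞ.1.const_mul b)).trans ?_
    simp only [Function.comp_apply, id_eq]
    rw [integral_const_mul, hΞm, mul_zero, inner_zero_right]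
  simp_rw [hsplit]
  rw [integral_norm_add_sq_of_integral_inner_eq_zero (X := fun ω => bias + a * (G ω - γ))
      ((memLp_const bias).add hU) (hΞ.const_mul b) horth₂,
    integral_norm_add_sq_of_integral_inner_eq_zero (X := fun _ => bias) (memLp_const bias) hU
      horth₁]
  simp only [bias, a, b, integral_const_mul, integral_const, probReal_univ, one_smul, norm_mul,
    norm_div, RCLike.norm_ofReal, div_pow, mul_pow, sq_abs]

lemma tsum_eq_sum_sub_add_tsum {ι α : Type*} [AddCommGroup α] [TopologicalSpace α]
    [IsTopologicalAddGroup α] [T2Space α] {g c : ι → α} (s : Finset ι) (hc : Summable c)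
    (hg : ∀ i ∉ s, g i = c i) :
    ∑' i, g i = ∑ i ∈ s, (g i - c i) + ∑' i, c i := by
  have hd : ∀ i ∉ s, g i - c i = 0 := fun i hi => sub_eq_zero.2 (hg i hi)
  calc ∑' i, g i = ∑' i, ((g i - c i) + c i) := by simp
    _ = ∑' i, (g i - c i) + ∑' i, c i := (summable_of_ne_finset_zero hd).tsum_add hc
    _ = ∑ i ∈ s, (g i - c i) + ∑' i, c i := by rw [tsum_eq_sum hd]

lemma integral_tsum_of_eq_off_finset {ι : Type*} {F : ι → Ω → ℝ} {c : ι → ℝ} (s : Finset ι)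
    (hc : Summable c) (hF : ∀ i ∉ s, ∀ ω, F i ω = c i) (hint : ∀ i ∈ s, Integrable (F i) μ) :
    ∫ ω, ∑' i, F i ω ∂μ = ∑' i, ∫ ω, F i ω ∂μ := by
  have hFint : ∀ i ∉ s, ∫ ω, F i ω ∂μ = c i := fun i hi => by simp [hF i hi]
  simp_rw [tsum_eq_sum_sub_add_tsum s hc (hF · · _), tsum_eq_sum_sub_add_tsum s hc hFint]
  have hcentered : ∀ i ∈ s, Integrable (fun ω => F i ω - c i) μ :=
    fun i hi => (hint i hi).sub (integrable_const _)
  rw [integral_add (integrable_finsetSum s hcentered) (integrable_const _),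
    integral_finsetSum s hcentered]
  refine congrArg₂ _ (Finset.sum_congr rfl fun i hi => ?_) (by simp)
  simp [integral_sub (hint i hi) (integrable_const _)]

lemma integral_norm_filter_sub_sq_of_moments {G Ξ : Ω → ℂ} {θ γ : ℂ} {n : ℕ} (ε l : ℝ)
    (hγ : γ ≠ 0) (hG : MemLp G 2 μ) (hΞ : MemLp Ξ 2 μ) (hind : IndepFun G Ξ μ)
    (hGm : ∫ ω, G ω ∂μ = γ) (hGvar : ∫ ω, ‖G ω - γ‖ ^ 2 ∂μ = (1 - ‖γ‖ ^ 2) / n)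
    (hΞm : ∫ ω, Ξ ω ∂μ = 0) (hΞvar : ∫ ω, ‖Ξ ω‖ ^ 2 ∂μ = 1) :
    ∫ ω, ‖(l : ℂ) * (θ * G ω + ε / √n * Ξ ω) / γ - θ‖ ^ 2 ∂μ
      = (l - 1) ^ 2 * ‖θ‖ ^ 2 + ε ^ 2 / n * (l ^ 2 / ‖γ‖ ^ 2)
        + 1 / n * (l ^ 2 * ‖θ‖ ^ 2 * (1 / ‖γ‖ ^ 2 - 1)) := by
  refine (integral_norm_filter_sub_sq l hγ hG hΞ hind hGm hΞm).trans ?_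
  have hδ : ‖(ε / √n : ℂ)‖ ^ 2 = ε ^ 2 / n := by
    simp only [norm_div, Complex.norm_real, Real.norm_eq_abs, div_pow, sq_abs,
      Real.sq_sqrt (Nat.cast_nonneg n)]
  have hγ' : ‖γ‖ ≠ 0 := norm_ne_zero_iff.2 hγ
  rw [hGvar, hΞvar, hδ]
  field_simp
  ring

end Scalar

theorem risk_decomposition_general
    {Ω : Type*} [MeasurableSpace Ω] (μ : Measure Ω) [IsProbabilityMeasure μ]
    (n : ℕ) (hn : 1 ≤ n) (ε : ℝ)
    (τ : Fin n → Ω → ℝ)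
    (hmeas : ∀ j, Measurable (τ j))
    (hindep : iIndepFun τ μ)
    (hident : ∀ j, IdentDistrib (τ j) (τ ⟨0, hn⟩) μ μ)
    (θ : ℤ → ℂ) (hθ : Summable fun k => ‖θ k‖ ^ 2)
    (γ : ℤ → ℂ) (hγ0 : ∀ k, γ k ≠ 0)
    (hγ : ∀ k : ℤ, γ k = ∫ ω, Complex.exp (-(2 * π * Complex.I * k * τ ⟨0, hn⟩ ω)) ∂μ)
    (γt : ℤ → Ω → ℂ)
    (hγt : ∀ k ω, γt k ω = (n : ℂ)⁻¹ * ∑ j, Complex.exp (-(2 * π * Complex.I * k * τ j ω)))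
    (ξ : ℤ → Ω → ℂ)
    (hξmeas : ∀ k, Measurable (ξ k))
    (hξ_mean : ∀ k, (∫ ω, ξ k ω ∂μ) = 0)
    (hξ_var : ∀ k, (∫ ω, ‖ξ k ω‖ ^ 2 ∂μ) = 1)
    (hξ_indep : ∀ k, IndepFun (γt k) (ξ k) μ)
    (c : ℤ → Ω → ℂ)
    (hc : ∀ k ω, c k ω = θ k * γt k ω + (ε / Real.sqrt n) * ξ k ω)
    (lam : ℤ → ℝ) (hlam : (Function.support lam).Finite)
    (θhat : ℤ → Ω → ℂ)
    (hθhat : ∀ k ω, θhat k ω = (lam k : ℂ) * c k ω / γ k) :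
    (∫ ω, ∑' k : ℤ, ‖θhat k ω - θ k‖ ^ 2 ∂μ)
      = (∑' k : ℤ, (lam k - 1) ^ 2 * ‖θ k‖ ^ 2)
        + (ε ^ 2 / n) * ∑' k : ℤ, (lam k) ^ 2 / ‖γ k‖ ^ 2
        + (1 / n) * ∑' k : ℤ, (lam k) ^ 2 * ‖θ k‖ ^ 2 * (1 / ‖γ k‖ ^ 2 - 1) := by
  have hchar : ∀ k : ℤ, MemLp (γt k) 2 μ ∧ ∫ ω, γt k ω ∂μ = γ k ∧
      ∫ ω, ‖γt k ω - γ k‖ ^ 2 ∂μ = (1 - ‖γ k‖ ^ 2) / n := fun k =>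
    moments_average_of_unimodular (f := fun t : ℝ => Complex.exp (-(2 * π * Complex.I * k * t)))
      hmeas hindep hident (by fun_prop) (fun t => by simp [Complex.norm_exp]) (hγ k).symm (hγt k)
  -- a non-integrable `‖ξ k‖ ^ 2` would have Bochner integral `0`, not `1`
  have hξ : ∀ k, MemLp (ξ k) 2 μ := fun k =>
    (memLp_two_iff_integrable_sq_norm (hξmeas k).aestronglyMeasurable).2
      (Integrable.of_integral_ne_zero (by simp [hξ_var]))
  have hθhat_eq : ∀ k ω,
      θhat k ω = (lam k : ℂ) * (θ k * γt k ω + ε / √n * ξ k ω) / γ k := fun k ω => by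
    rw [hθhat, hc]
  have hint : ∀ k, Integrable (fun ω => ‖θhat k ω - θ k‖ ^ 2) μ := fun k => by
    simp only [hθhat_eq]
    exact (((((hchar k).1.const_mul _).add ((hξ k).const_mul _)).const_mul _).mul_const _
      |>.sub (memLp_const _)).integrable_norm_pow two_ne_zero
  have hrisk : ∀ k, ∫ ω, ‖θhat k ω - θ k‖ ^ 2 ∂μ = (lam k - 1) ^ 2 * ‖θ k‖ ^ 2
      + ε ^ 2 / n * (lam k ^ 2 / ‖γ k‖ ^ 2)
      + 1 / n * (lam k ^ 2 * ‖θ k‖ ^ 2 * (1 / ‖γ k‖ ^ 2 - 1)) := fun k => by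
    simp only [hθhat_eq]
    exact integral_norm_filter_sub_sq_of_moments ε (lam k) (hγ0 k) (hchar k).1 (hξ k)
      (hξ_indep k) (hchar k).2.1 (hchar k).2.2 (hξ_mean k) (hξ_var k)
  have hoff : ∀ k ∉ hlam.toFinset, lam k = 0 := fun k hk => by simpa using hk
  have hfin : ∀ f : ℤ → ℝ, (∀ k, lam k = 0 → f k = 0) → Summable f := fun f hf =>
    summable_of_ne_finset_zero (s := hlam.toFinset) fun k hk => hf k (hoff k hk)
  have hbias : Summable fun k => (lam k - 1) ^ 2 * ‖θ k‖ ^ 2 :=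
    hθ.congr_cofinite (hlam.eventually_cofinite_notMem.mono fun k hk => by
      simp [Function.notMem_support.1 hk])
  rw [integral_tsum_of_eq_off_finset hlam.toFinset hθ (fun k hk ω => by simp [hθhat, hoff k hk])
    fun k _ => hint k]
  simp_rw [hrisk]
  rw [(hbias.add ((hfin _ fun k hk => by simp [hk]).mul_left _)).tsum_add
      ((hfin _ fun k hk => by simp [hk]).mul_left _),
    hbias.tsum_add ((hfin _ fun k hk => by simp [hk]).mul_left _), tsum_mul_left, tsum_mul_left]

/-- Bias-variance decomposition of the risk of a linear (filtered) estimator in the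
randomly shifted curves sequence model (Lemma 1 of the paper). -/
theorem risk_decomposition
    {Ω : Type*} [MeasurableSpace Ω] (μ : Measure Ω) [IsProbabilityMeasure μ]
    (n : ℕ) (hn : 1 ≤ n) (ε : ℝ) (hε : 0 < ε)
    (τ : Fin n → Ω → ℝ)
    (hmeas : ∀ j, Measurable (τ j))
    (hindep : iIndepFun τ μ)
    (hident : ∀ j, IdentDistrib (τ j) (τ ⟨0, hn⟩) μ μ)
    (θ : ℤ → ℂ) (hθ : Summable fun k => ‖θ k‖ ^ 2)
    (γ : ℤ → ℂ) (hγ0 : ∀ k, γ k ≠ 0)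
    (hγ : ∀ k : ℤ, γ k = ∫ ω, Complex.exp (-(2 * π * Complex.I * k * τ ⟨0, hn⟩ ω)) ∂μ)
    (γt : ℤ → Ω → ℂ)
    (hγt : ∀ k ω, γt k ω = (n : ℂ)⁻¹ * ∑ j, Complex.exp (-(2 * π * Complex.I * k * τ j ω)))
    (ξ : ℤ → Ω → ℂ)
    (hξmeas : ∀ k, Measurable (ξ k))
    (hξ_mean : ∀ k, (∫ ω, ξ k ω ∂μ) = 0)
    (hξ_var : ∀ k, (∫ ω, ‖ξ k ω‖ ^ 2 ∂μ) = 1)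
    (hξ_indep : ∀ k, IndepFun (γt k) (ξ k) μ)
    (c : ℤ → Ω → ℂ)
    (hc : ∀ k ω, c k ω = θ k * γt k ω + (ε / Real.sqrt n) * ξ k ω)
    (lam : ℤ → ℝ) (hlam : (Function.support lam).Finite)
    (θhat : ℤ → Ω → ℂ)
    (hθhat : ∀ k ω, θhat k ω = (lam k : ℂ) * c k ω / γ k) :
    (∫ ω, ∑' k : ℤ, ‖θhat k ω - θ k‖ ^ 2 ∂μ)
      = (∑' k : ℤ, (lam k - 1) ^ 2 * ‖θ k‖ ^ 2)
        + (ε ^ 2 / n) * ∑' k : ℤ, (lam k) ^ 2 / ‖γ k‖ ^ 2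
        + (1 / n) * ∑' k : ℤ, (lam k) ^ 2 * ‖θ k‖ ^ 2 * (1 / ‖γ k‖ ^ 2 - 1) :=
  risk_decomposition_general μ n hn ε τ hmeas hindep hident θ hθ γ hγ0 hγ γt hγt ξ hξmeas hξ_mean
    hξ_var hξ_indep c hc lam hlam θhat hθhat
end

section
/- (Tail integral bound) Let τ₁,…,τₙ be i.i.d. real random variables, γ_k = E[e^{-2πikτ₁}], γ̃_k = (1/n)∑_j e^{-2πikτ_j}. There exists a constant C > 0 (independent of n, k, Q) such that for all Q > 0, E[(|γ̃_k - γ_k|² - Q) 1_{|γ̃_k - γ_k|² > Q}] ≤ (C/n) e^{-Qn/4}. -/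
/-!
Write `γ̃_k - γ_k = U + iV`. Both `U` and `V` are averages of `n` independent centred variables
with values in an interval of length `2`, so by Hoeffding's lemma they are sub-Gaussian with
variance proxy `1/n`. As `(|z|² - Q)₊ ≤ (U² - Q/2)₊ + (V² - Q/2)₊`, it suffices to bound
`E[(X² - q)₊]` for `X` sub-Gaussian with proxy `c`: the pointwise bound
`(x² - q)₊ ≤ 2c e^{-q/c} (e^{tx} + e^{-tx})` with `t = √(q + c)/c`, integrated against
`E[e^{±tX}] ≤ e^{ct²/2}`, gives `4 √e c e^{-q/(2c)}`.
-/

open MeasureTheory ProbabilityTheory Real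
open scoped NNReal

lemma mul_indicator_lt_eq_max {α : Type*} (f : α → ℝ) (Q : ℝ) (a : α) :
    (f a - Q) * {x | Q < f x}.indicator (fun _ ↦ (1 : ℝ)) a = max (f a - Q) 0 := by
  by_cases h : Q < f a
  · simp [h, h.le]
  · simp [h, not_lt.1 h]

lemma max_sq_sub_le_exp_add_exp {c q : ℝ} (hc : 0 < c) (hq : 0 ≤ q) (x : ℝ) :
    max (x ^ 2 - q) 0 ≤ 2 * c * exp (-(q / c)) *
      (exp (√(q + c) / c * x) + exp (-(√(q + c) / c * x))) := by
  set t := √(q + c) / c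
  have hct : c * t = √(q + c) := mul_div_cancel₀ _ hc.ne'
  have hct2 : 1 ≤ c * t ^ 2 := by
    rw [show c * t ^ 2 = (c * t) ^ 2 / c by field_simp, hct, sq_sqrt (by linarith),
      le_div_iff₀ hc]
    linarith
  have hrt : √q ≤ c * t := hct ▸ sqrt_le_sqrt (by linarith)
  have hqt : q / c ≤ t * √q := by
    rw [div_le_iff₀ hc, mul_assoc, mul_comm √q, ← mul_assoc, mul_comm t]
    nlinarith [sq_sqrt hq, sqrt_nonneg q]
  -- For `y = √q + s`, `ct ≥ √q` and `ct² ≥ 1` make `2c (1 + ts + (ts)²/2)` dominate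
  -- `y² - q = 2√q s + s²`, and `t√q ≥ q/c` absorbs the factor `exp (-(q / c))`.
  suffices key : ∀ y, √q ≤ y → y ^ 2 - q ≤ 2 * c * exp (-(q / c)) * exp (t * y) by
    refine max_le ?_ (by positivity)
    have h0 : 0 < 2 * c * exp (-(q / c)) := by positivity
    rcases le_or_gt (x ^ 2) q with hx | hx
    · nlinarith [exp_pos (t * x), exp_pos (-(t * x))]
    rcases le_or_gt 0 x with hx0 | hx0
    · have := key x (by nlinarith [sq_sqrt hq, sqrt_nonneg q])
      nlinarith [exp_pos (-(t * x))]
    · have := key (-x) (by nlinarith [sq_sqrt hq, sqrt_nonneg q])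
      rw [neg_sq, mul_neg] at this
      nlinarith [exp_pos (t * x)]
  intro y hy
  set s := y - √q
  have hs : 0 ≤ s := by linarith
  have hu : t * s ≤ -(q / c) + t * y := by nlinarith
  have hexp := (quadratic_le_exp_of_nonneg (by positivity : 0 ≤ t * s)).trans (exp_le_exp.2 hu)
  have hy2 : y ^ 2 - q = 2 * √q * s + s ^ 2 := by
    have := sq_sqrt hq; simp only [s]; nlinarith
  rw [mul_assoc, ← exp_add, hy2]
  nlinarith [mul_le_mul_of_nonneg_right hrt hs, mul_le_mul_of_nonneg_right hct2 (sq_nonneg s)]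

section

variable {Ω : Type*} [MeasurableSpace Ω] {μ : Measure Ω}

namespace ProbabilityTheory.HasSubgaussianMGF

variable {X : Ω → ℝ} {c : ℝ≥0}

lemma integrable_max_sq_sub (hX : HasSubgaussianMGF X c μ) {q : ℝ} (hq : 0 ≤ q) :
    Integrable (fun ω ↦ max (X ω ^ 2 - q) 0) μ := by
  refine (hX.memLp 2).integrable_sq.mono' ?_ (.of_forall fun ω ↦ ?_)
  · exact ((hX.aestronglyMeasurable.pow 2).sub aestronglyMeasurable_const).sup
      aestronglyMeasurable_const
  · rw [Real.norm_of_nonneg (le_max_right _ _)]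
    exact max_le (by linarith) (sq_nonneg _)

lemma integral_max_sq_sub_le (hX : HasSubgaussianMGF X c μ) (hc : 0 < c) {q : ℝ}
    (hq : 0 ≤ q) :
    ∫ ω, max (X ω ^ 2 - q) 0 ∂μ ≤ 4 * exp (1 / 2) * c * exp (-(q / (2 * c))) := by
  have hc' : (0 : ℝ) < c := hc
  set t := √(q + c) / c
  calc ∫ ω, max (X ω ^ 2 - q) 0 ∂μ
      ≤ ∫ ω, 2 * c * exp (-(q / c)) * (exp (t * X ω) + exp (-t * X ω)) ∂μ := by
        refine integral_mono_of_nonneg (.of_forall fun _ ↦ le_max_right _ _)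
          (((hX.integrable_exp_mul t).add (hX.integrable_exp_mul (-t))).const_mul _)
          (.of_forall fun ω ↦ ?_)
        simpa only [neg_mul] using max_sq_sub_le_exp_add_exp hc' hq (X ω)
    _ = 2 * c * exp (-(q / c)) * (mgf X μ t + mgf X μ (-t)) := by
        rw [integral_const_mul, integral_add (hX.integrable_exp_mul t)
          (hX.integrable_exp_mul (-t))]
        rfl
    _ ≤ 2 * c * exp (-(q / c)) * (2 * exp (c * t ^ 2 / 2)) := by
        have h := hX.mgf_le (-t)
        rw [neg_sq] at h
        gcongr
        linarith [hX.mgf_le t]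
    _ = 4 * exp (1 / 2) * c * exp (-(q / (2 * c))) := by
        have : (c : ℝ) * t ^ 2 / 2 = (q + c) / (2 * c) := by
          simp only [t]; rw [div_pow, sq_sqrt (by positivity)]; field_simp
        rw [this, mul_assoc (2 * _), mul_left_comm _ 2, ← mul_assoc, ← exp_add,
          show -(q / c) + (q + c) / (2 * c) = 1 / 2 + -(q / (2 * c)) by field_simp; ring, exp_add]
        ring

end ProbabilityTheory.HasSubgaussianMGF

lemma ProbabilityTheory.hasSubgaussianMGF_average_sub_integral_of_mem_Icc
    [IsProbabilityMeasure μ] {ι : Type*} [Fintype ι] {Y : ι → Ω → ℝ}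
    (hindep : iIndepFun Y μ) (hm : ∀ i, AEMeasurable (Y i) μ) {a b : ℝ}
    (hb : ∀ i, ∀ᵐ ω ∂μ, Y i ω ∈ Set.Icc a b) :
    HasSubgaussianMGF (fun ω ↦ (Fintype.card ι : ℝ)⁻¹ * ∑ i, (Y i ω - μ[Y i]))
      ((‖b - a‖₊ / 2) ^ 2 / Fintype.card ι) μ := by
  have hindep' : iIndepFun (fun i ω ↦ Y i ω - μ[Y i]) μ :=
    hindep.comp (fun i y ↦ y - ∫ ω, Y i ω ∂μ) fun _ ↦ measurable_sub_const _
  have hsum := HasSubgaussianMGF.sum_of_iIndepFun hindep' (s := Finset.univ)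
    fun i _ ↦ hasSubgaussianMGF_of_mem_Icc (hm i) (hb i)
  convert hsum.const_mul (Fintype.card ι : ℝ)⁻¹ using 1
  ext
  change _ = (Fintype.card ι : ℝ)⁻¹ ^ 2 * ((∑ _i : ι, (‖b - a‖₊ / 2) ^ 2 : ℝ≥0) : ℝ)
  simp only [NNReal.coe_div, NNReal.coe_pow, coe_nnnorm, norm_eq_abs, NNReal.coe_ofNat,
    NNReal.coe_natCast, inv_pow, Finset.sum_const, Finset.card_univ, nsmul_eq_mul, NNReal.coe_mul]
  rcases eq_or_ne (Fintype.card ι : ℝ) 0 with h | h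
  · simp [h]
  · field_simp

lemma hasSubgaussianMGF_clm_average_sub [IsProbabilityMeasure μ] {ι : Type*} [Fintype ι]
    [Nonempty ι] {Z : ι → Ω → ℂ} (hindep : iIndepFun Z μ) (hm : ∀ i, Measurable (Z i))
    (hb : ∀ i ω, ‖Z i ω‖ ≤ 1) {γ : ℂ} (hγ : ∀ i, μ[Z i] = γ) {L : ℂ →L[ℝ] ℝ} (hL : ‖L‖ ≤ 1) :
    HasSubgaussianMGF (fun ω ↦ L ((Fintype.card ι : ℂ)⁻¹ * ∑ i, Z i ω - γ))
      (1 / Fintype.card ι) μ := by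
  have hn : (Fintype.card ι : ℝ) ≠ 0 := by positivity
  have hLγ : ∀ i, μ[fun ω ↦ L (Z i ω)] = L γ := fun i ↦ by
    rw [← hγ i, L.integral_comp_comm]
    exact Integrable.of_bound (hm i).aestronglyMeasurable 1 (.of_forall (hb i))
  have hLZ : ∀ i ω, L (Z i ω) ∈ Set.Icc (-1) 1 := fun i ω ↦
    abs_le.1 ((L.le_opNorm _).trans (by nlinarith [hb i ω, norm_nonneg (Z i ω)]))
  have hY := hasSubgaussianMGF_average_sub_integral_of_mem_Icc
    (hindep.comp (fun _ z ↦ L z) fun _ ↦ L.continuous.measurable)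
    (fun i ↦ (L.continuous.measurable.comp (hm i)).aemeasurable)
    fun i ↦ .of_forall (hLZ i)
  rw [show (‖(1 : ℝ) - -1‖₊ / 2) ^ 2 = 1 by ext; norm_num] at hY
  refine hY.congr (.of_forall fun ω ↦ ?_)
  simp only [Function.comp_apply, hLγ, Finset.sum_sub_distrib, Finset.sum_const,
    Finset.card_univ, nsmul_eq_mul, ← map_sum]
  rw [show (Fintype.card ι : ℂ)⁻¹ * ∑ i, Z i ω = (Fintype.card ι : ℝ)⁻¹ • ∑ i, Z i ω by
      simp [Complex.real_smul], map_sub, map_smul, smul_eq_mul]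
  field_simp

lemma integral_max_norm_sq_average_sub_le [IsProbabilityMeasure μ] {ι : Type*} [Fintype ι]
    [Nonempty ι] {Z : ι → Ω → ℂ} (hindep : iIndepFun Z μ) (hm : ∀ i, Measurable (Z i))
    (hb : ∀ i ω, ‖Z i ω‖ ≤ 1) {γ : ℂ} (hγ : ∀ i, μ[Z i] = γ) {Q : ℝ} (hQ : 0 ≤ Q) :
    ∫ ω, max (‖(Fintype.card ι : ℂ)⁻¹ * ∑ i, Z i ω - γ‖ ^ 2 - Q) 0 ∂μ
      ≤ 8 * exp (1 / 2) / Fintype.card ι * exp (-(Q * Fintype.card ι) / 4) := by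
  set n := Fintype.card ι
  set W := fun ω ↦ (n : ℂ)⁻¹ * ∑ i, Z i ω - γ
  have tail : ∀ {X : Ω → ℝ}, HasSubgaussianMGF X (1 / n) μ →
      ∫ ω, max (X ω ^ 2 - Q / 2) 0 ∂μ ≤ 4 * exp (1 / 2) / n * exp (-(Q * n) / 4) := by
    intro X hX
    convert hX.integral_max_sq_sub_le (by positivity) (by positivity : 0 ≤ Q / 2) using 1
    push_cast
    field_simp
    ring_nf
  have hre := hasSubgaussianMGF_clm_average_sub hindep hm hb hγ (L := Complex.reCLM) (by simp)
  have him := hasSubgaussianMGF_clm_average_sub hindep hm hb hγ (L := Complex.imCLM) (by simp)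
  simp only [Complex.reCLM_apply, Complex.imCLM_apply] at hre him
  calc ∫ ω, max (‖W ω‖ ^ 2 - Q) 0 ∂μ
      ≤ ∫ ω, (max ((W ω).re ^ 2 - Q / 2) 0 + max ((W ω).im ^ 2 - Q / 2) 0) ∂μ := by
        refine integral_mono_of_nonneg (.of_forall fun _ ↦ le_max_right _ _)
          ((hre.integrable_max_sq_sub (by positivity)).add
            (him.integrable_max_sq_sub (by positivity))) (.of_forall fun ω ↦ ?_)
        have := le_max_left ((W ω).re ^ 2 - Q / 2) 0
        have := le_max_left ((W ω).im ^ 2 - Q / 2) 0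
        have := Complex.sq_norm_sub_sq_re (W ω)
        exact max_le (by linarith) (by positivity)
    _ = ∫ ω, max ((W ω).re ^ 2 - Q / 2) 0 ∂μ + ∫ ω, max ((W ω).im ^ 2 - Q / 2) 0 ∂μ :=
        integral_add (hre.integrable_max_sq_sub (by positivity))
          (him.integrable_max_sq_sub (by positivity))
    _ ≤ 4 * exp (1 / 2) / n * exp (-(Q * n) / 4) + 4 * exp (1 / 2) / n * exp (-(Q * n) / 4) :=
        add_le_add (tail hre) (tail him)
    _ = 8 * exp (1 / 2) / n * exp (-(Q * n) / 4) := by ring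

end

/-- Tail integral bound for the empirical characteristic function: there is a universal
constant `C` (independent of `n`, `k` and `Q`) such that
`E[(|γ̃_k - γ_k|² - Q) 1_{|γ̃_k - γ_k|² > Q}] ≤ (C/n) e^{-Qn/4}`. -/
theorem empirical_charfun_tail_integral :
    ∃ C : ℝ, 0 < C ∧
      ∀ (Ω : Type) [MeasurableSpace Ω] (μ : Measure Ω) [IsProbabilityMeasure μ]
        (n : ℕ) (hn : 1 ≤ n) (τ : Fin n → Ω → ℝ),
        (∀ j, Measurable (τ j)) →
        iIndepFun τ μ →
        (∀ j, IdentDistrib (τ j) (τ ⟨0, hn⟩) μ μ) →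
        ∀ (k : ℤ) (γ : ℂ),
          γ = (∫ ω, Complex.exp (-(2 * π * Complex.I * k * τ ⟨0, hn⟩ ω)) ∂μ) →
        ∀ (γt : Ω → ℂ),
          (∀ ω, γt ω = (n : ℂ)⁻¹ * ∑ j, Complex.exp (-(2 * π * Complex.I * k * τ j ω))) →
        ∀ Q : ℝ, 0 < Q →
          (∫ ω, (‖γt ω - γ‖ ^ 2 - Q) * Set.indicator {ω' | Q < ‖γt ω' - γ‖ ^ 2} (fun _ => (1:ℝ)) ω ∂μ)
            ≤ (C / n) * Real.exp (-(Q * n) / 4) := by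
  refine ⟨8 * exp (1 / 2), by positivity, ?_⟩
  intro Ω _ μ _ n hn τ hτ hindep hident k γ hγ γt hγt Q hQ
  refine (integral_congr_ae (.of_forall fun ω ↦
    mul_indicator_lt_eq_max (fun ω ↦ ‖γt ω - γ‖ ^ 2) Q ω)).trans_le ?_
  obtain rfl : γt = _ := funext hγt
  set e : ℝ → ℂ := fun x ↦ Complex.exp (-(2 * π * Complex.I * k * x))
  have he : Measurable e := by fun_prop
  have : Nonempty (Fin n) := ⟨⟨0, hn⟩⟩
  simpa only [Fintype.card_fin] using integral_max_norm_sq_average_sub_le (Z := fun j ω ↦ e (τ j ω))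
    (hindep.comp (fun _ ↦ e) fun _ ↦ he) (fun j ↦ he.comp (hτ j))
    (fun j ω ↦ by simp [e, Complex.norm_exp])
    (fun j ↦ hγ ▸ ((hident j).comp he).integral_eq) hQ.le
end
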